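/- (Appendix F) Let M asnd S be points of the Euclidean plane ℝ² at distance d = dist(M,S) > 0, and let 0 < r ≤ R be radii with R − r ≤ d ≤ R + r. Set φ₃ = arccos((R² + d² − r²)/(2Rd)) and φ₄ = arccos((r² + d² − R²)/(2rd)). Then the Lebesgue area of the intersection of the disk of radius R centered at M with the disk of radius r centered at S is volume( closedBall(M, R) ∩ closedBall(S, r) ) = φ₃·R² + φ₄·r² − R·d·sin φ₃. -/

import Mathlib

/-
The chord through the two intersection points of the circles splits the lens into two circular
segments. With `φ₃, φ₄` the half-angles subtended by the chord at `M` and `S`, the chord lies at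
distance `R cos φ₃` from `M` and `r cos φ₄` from `S`, these add up to `d`, and the half-chord is
`R sin φ₃ = r sin φ₄`. Slicing parallel to the chord and substituting `x = ρ cos θ`, the segment of
a disk of radius `ρ` cut off at distance `ρ cos φ` from the center has area
`ρ² (φ - sin φ cos φ)`; adding the two segments gives `φ₃ R² + φ₄ r² - R d sin φ₃`.
-/

open MeasureTheory Real Set Metric
open scoped InnerProductSpace

theorem integral_sqrt_sq_sub_sq {ρ φ : ℝ} (hρ : 0 ≤ ρ) (hφ₀ : 0 ≤ φ) (hφπ : φ ≤ π) :
    ∫ x in ρ * cos φ..ρ, √(ρ ^ 2 - x ^ 2) = ρ ^ 2 * (φ - sin φ * cos φ) / 2 := by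
  have hsubst : ∫ θ in φ..0, √(ρ ^ 2 - (ρ * cos θ) ^ 2) * -(ρ * sin θ)
      = ∫ x in ρ * cos φ..ρ, √(ρ ^ 2 - x ^ 2) := by
    have := intervalIntegral.integral_comp_mul_deriv (a := φ) (b := 0)
      (g := fun x => √(ρ ^ 2 - x ^ 2))
      (fun θ _ => by simpa using (hasDerivAt_cos θ).const_mul ρ) (by fun_prop) (by fun_prop)
    rwa [cos_zero, mul_one] at this
  rw [← hsubst, intervalIntegral.integral_symm, ← intervalIntegral.integral_neg]
  calc ∫ θ in 0..φ, -(√(ρ ^ 2 - (ρ * cos θ) ^ 2) * -(ρ * sin θ))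
      = ∫ θ in 0..φ, ρ ^ 2 * sin θ ^ 2 := by
        refine intervalIntegral.integral_congr fun θ hθ => ?_
        rw [uIcc_of_le hφ₀] at hθ
        have hsin : 0 ≤ sin θ := sin_nonneg_of_nonneg_of_le_pi hθ.1 (hθ.2.trans hφπ)
        have : ρ ^ 2 - (ρ * cos θ) ^ 2 = (ρ * sin θ) ^ 2 := by
          linear_combination -ρ ^ 2 * sin_sq_add_cos_sq θ
        simp only [this, sqrt_sq (mul_nonneg hρ hsin)]
        ring
    _ = ρ ^ 2 * (φ - sin φ * cos φ) / 2 := by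
      rw [intervalIntegral.integral_const_mul, integral_sin_sq]
      simp only [sin_zero, cos_zero]
      ring

theorem Real.volume_setOf_sq_le (c : ℝ) :
    volume {y : ℝ | y ^ 2 ≤ c} = ENNReal.ofReal (2 * √c) := by
  rcases le_or_gt 0 c with hc | hc
  · have : {y : ℝ | y ^ 2 ≤ c} = Icc (-√c) √c := by ext y; exact Real.sq_le hc
    rw [this, volume_Icc]
    ring_nf
  · have : {y : ℝ | y ^ 2 ≤ c} = ∅ := eq_empty_of_forall_notMem fun y hy => by
      nlinarith [sq_nonneg y, hy.out]
    rw [this, measure_empty, sqrt_eq_zero'.2 hc.le, mul_zero, ENNReal.ofReal_zero]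

def circularSegment (ρ a : ℝ) : Set (ℝ × ℝ) := {p | p.1 ^ 2 + p.2 ^ 2 ≤ ρ ^ 2 ∧ a ≤ p.1}

theorem measurableSet_circularSegment (ρ a : ℝ) : MeasurableSet (circularSegment ρ a) := by
  rw [circularSegment, ofPred_and]
  exact (measurableSet_le (by fun_prop) (by fun_prop)).inter
    (measurableSet_le (by fun_prop) (by fun_prop))

theorem volume_circularSegment {ρ φ : ℝ} (hρ : 0 ≤ ρ) (hφ₀ : 0 ≤ φ) (hφπ : φ ≤ π) :
    volume (circularSegment ρ (ρ * cos φ)) = ENNReal.ofReal (ρ ^ 2 * (φ - sin φ * cos φ)) := by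
  set a := ρ * cos φ
  have hslice (x : ℝ) : volume (Prod.mk x ⁻¹' circularSegment ρ a)
      = (Icc a ρ).indicator (fun x => ENNReal.ofReal (2 * √(ρ ^ 2 - x ^ 2))) x := by
    rcases le_or_gt a x with hax | hxa
    · have : Prod.mk x ⁻¹' circularSegment ρ a = {y | y ^ 2 ≤ ρ ^ 2 - x ^ 2} := by
        ext y
        simp only [circularSegment, mem_preimage, mem_ofPred_eq, hax, and_true]
        constructor <;> intro <;> linarith
      rw [this, Real.volume_setOf_sq_le]
      rcases le_or_gt x ρ with hxρ | hρx
      · rw [indicator_of_mem (show x ∈ Icc a ρ from ⟨hax, hxρ⟩)]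
      · rw [indicator_of_notMem (fun h => hρx.not_ge h.2), sqrt_eq_zero'.2 (by nlinarith),
          mul_zero, ENNReal.ofReal_zero]
    · have : Prod.mk x ⁻¹' circularSegment ρ a = ∅ :=
        eq_empty_of_forall_notMem fun y hy => hxa.not_ge hy.2
      rw [this, measure_empty, indicator_of_notMem (fun h => hxa.not_ge h.1)]
  have haρ : a ≤ ρ := mul_le_of_le_one_right hρ (cos_le_one φ)
  rw [Measure.volume_eq_prod, Measure.prod_apply (measurableSet_circularSegment ρ a),
    lintegral_congr hslice, lintegral_indicator measurableSet_Icc,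
    ← ofReal_integral_eq_lintegral_ofReal (Continuous.integrableOn_Icc (by fun_prop))
      (ae_of_all _ fun x => by positivity),
    integral_Icc_eq_integral_Ioc, ← intervalIntegral.integral_of_le haρ,
    intervalIntegral.integral_const_mul, integral_sqrt_sq_sub_sq hρ hφ₀ hφπ]
  ring_nf

theorem EuclideanSpace.volume_closedBall_inter_halfSpace (c u : EuclideanSpace ℝ (Fin 2))
    (hu : ‖u‖ = 1) {ρ φ : ℝ} (hρ : 0 ≤ ρ) (hφ₀ : 0 ≤ φ) (hφπ : φ ≤ π) :
    volume (closedBall c ρ ∩ {x | ρ * cos φ ≤ ⟪u, x - c⟫_ℝ})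
      = ENNReal.ofReal (ρ ^ 2 * (φ - sin φ * cos φ)) := by
  set e : EuclideanSpace ℝ (Fin 2) := EuclideanSpace.single 0 1
  set L := (ℝ ∙ (u - e))ᗮ.reflection
  have hL : L u = e := Submodule.reflection_sub (by simp [hu, e])
  set T : EuclideanSpace ℝ (Fin 2) → ℝ × ℝ := fun x => (L (x - c) 0, L (x - c) 1)
  have hT : MeasurePreserving T :=
    ((volume_preserving_finTwoArrow ℝ).comp (PiLp.volume_preserving_ofLp (Fin 2))).comp
      (L.measurePreserving.comp (measurePreserving_sub_right volume c))
  have hpre : closedBall c ρ ∩ {x | ρ * cos φ ≤ ⟪u, x - c⟫_ℝ}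
      = T ⁻¹' circularSegment ρ (ρ * cos φ) := by
    ext x
    have hdist : dist x c ^ 2 = L (x - c) 0 ^ 2 + L (x - c) 1 ^ 2 := by
      rw [dist_eq_norm, ← L.norm_map, EuclideanSpace.norm_sq_eq, Fin.sum_univ_two]
      simp
    have hinner : ⟪u, x - c⟫_ℝ = L (x - c) 0 := by
      rw [← L.inner_map_map, hL, EuclideanSpace.inner_single_left]
      simp
    simp only [mem_inter_iff, mem_closedBall, mem_ofPred_eq, mem_preimage, circularSegment, T,
      hinner, ← hdist, sq_le_sq₀ dist_nonneg hρ]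
  rw [hpre, hT.measure_preimage (measurableSet_circularSegment _ _).nullMeasurableSet,
    volume_circularSegment hρ hφ₀ hφπ]

theorem MeasureTheory.Measure.addHaar_setOf_inner_eq {E : Type*} [NormedAddCommGroup E]
    [InnerProductSpace ℝ E] [FiniteDimensional ℝ E] [MeasurableSpace E] [BorelSpace E]
    (μ : Measure E) [μ.IsAddHaarMeasure] {u : E} (hu : u ≠ 0) (t : ℝ) :
    μ {x | ⟪u, x⟫_ℝ = t} = 0 := by
  have hset : {x | ⟪u, x⟫_ℝ = t}
      = ((affineSpan ℝ {t}).comap (innerₛₗ ℝ u).toAffineMap : Set E) := by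
    ext x; simp
  rw [hset]
  refine Measure.addHaar_affineSubspace μ _ fun htop => hu ?_
  have h0 : (0 : E) ∈ (affineSpan ℝ {t}).comap (innerₛₗ ℝ u).toAffineMap := htop ▸ trivial
  have hu_mem : u ∈ (affineSpan ℝ {t}).comap (innerₛₗ ℝ u).toAffineMap := htop ▸ trivial
  simp only [AffineSubspace.mem_comap, LinearMap.coe_toAffineMap, innerₛₗ_apply_apply,
    inner_zero_right, AffineSubspace.mem_affineSpan_singleton, inner_self_eq_norm_sq_to_K,
    ringHom_apply] at h0 hu_mem
  rw [← h0] at hu_mem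
  simpa using hu_mem

theorem inner_neg_sub_add_smul {E : Type*} [NormedAddCommGroup E] [InnerProductSpace ℝ E]
    {v : E} (hv : ‖v‖ = 1) (M x : E) (d : ℝ) :
    ⟪-v, x - (M + d • v)⟫_ℝ = d - ⟪v, x - M⟫_ℝ := by
  rw [sub_add_eq_sub_sub, inner_neg_left, inner_sub_right, inner_smul_right,
    real_inner_self_eq_norm_sq, hv]
  ring

theorem closedBall_inter_closedBall_eq_union {E : Type*} [NormedAddCommGroup E]
    [InnerProductSpace ℝ E] (M v : E) (hv : ‖v‖ = 1) {d R r a : ℝ} (hd : 0 ≤ d) (hR : 0 ≤ R)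
    (hr : 0 ≤ r) (ha : 2 * d * a = d ^ 2 + R ^ 2 - r ^ 2) :
    closedBall M R ∩ closedBall (M + d • v) r
      = (closedBall M R ∩ {x | a ≤ ⟪v, x - M⟫_ℝ})
        ∪ (closedBall (M + d • v) r ∩ {x | d - a ≤ ⟪-v, x - (M + d • v)⟫_ℝ}) := by
  ext x
  have hdist : dist x (M + d • v) ^ 2 = dist x M ^ 2 - 2 * d * ⟪v, x - M⟫_ℝ + d ^ 2 := by
    rw [dist_eq_norm, dist_eq_norm, sub_add_eq_sub_sub, norm_sub_sq_real, inner_smul_right,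
      norm_smul, real_inner_comm, hv, Real.norm_eq_abs, abs_of_nonneg hd]
    ring
  simp only [mem_inter_iff, mem_union, mem_closedBall, mem_ofPred_eq, inner_neg_sub_add_smul hv,
    ← sq_le_sq₀ dist_nonneg hR, ← sq_le_sq₀ dist_nonneg hr, hdist]
  constructor
  · rintro ⟨hM, hS⟩
    rcases le_total a ⟪v, x - M⟫_ℝ with h | h
    · exact Or.inl ⟨hM, h⟩
    · exact Or.inr ⟨hS, by linarith⟩
  · rintro (⟨hM, h⟩ | ⟨hS, h⟩)
    · exact ⟨hM, by nlinarith [mul_le_mul_of_nonneg_left h hd]⟩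
    · exact ⟨by nlinarith [mul_le_mul_of_nonneg_left (show ⟪v, x - M⟫_ℝ ≤ a by linarith) hd], hS⟩

theorem EuclideanSpace.volume_closedBall_inter_closedBall (M v : EuclideanSpace ℝ (Fin 2))
    (hv : ‖v‖ = 1) {R r φ ψ d : ℝ} (hR : 0 ≤ R) (hr : 0 ≤ r) (hφ₀ : 0 ≤ φ) (hφπ : φ ≤ π)
    (hψ₀ : 0 ≤ ψ) (hψπ : ψ ≤ π) (hsin : R * sin φ = r * sin ψ) (hd : R * cos φ + r * cos ψ = d)
    (hd₀ : 0 ≤ d) :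
    volume (closedBall M R ∩ closedBall (M + d • v) r)
      = ENNReal.ofReal (φ * R ^ 2 + ψ * r ^ 2 - R * d * sin φ) := by
  have ha : 2 * d * (R * cos φ) = d ^ 2 + R ^ 2 - r ^ 2 := by
    subst hd
    linear_combination R ^ 2 * sin_sq_add_cos_sq φ - r ^ 2 * sin_sq_add_cos_sq ψ
      - (R * sin φ + r * sin ψ) * hsin
  have hnull : volume ((closedBall M R ∩ {x | R * cos φ ≤ ⟪v, x - M⟫_ℝ})
      ∩ (closedBall (M + d • v) r ∩ {x | r * cos ψ ≤ ⟪-v, x - (M + d • v)⟫_ℝ})) = 0 := by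
    refine measure_mono_null (fun x ⟨⟨_, hM⟩, ⟨_, hS⟩⟩ => ?_)
      (Measure.addHaar_setOf_inner_eq volume (norm_ne_zero_iff.1 (hv ▸ one_ne_zero))
        (R * cos φ + ⟪v, M⟫_ℝ))
    rw [mem_ofPred_eq, inner_neg_sub_add_smul hv, inner_sub_right] at hS
    rw [mem_ofPred_eq, inner_sub_right] at hM
    rw [mem_ofPred_eq]
    linarith
  have hseg_nonneg (θ : ℝ) (hθ : 0 ≤ θ) : 0 ≤ θ - sin θ * cos θ := by
    nlinarith [sin_le (by linarith : 0 ≤ 2 * θ), sin_two_mul θ]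
  have hmeas : NullMeasurableSet
      (closedBall (M + d • v) r ∩ {x | r * cos ψ ≤ ⟪-v, x - (M + d • v)⟫_ℝ}) :=
    (measurableSet_closedBall.inter
      (measurableSet_le measurable_const (by fun_prop))).nullMeasurableSet
  rw [closedBall_inter_closedBall_eq_union M v hv hd₀ hR hr ha,
    show d - R * cos φ = r * cos ψ by linarith, measure_union₀ hmeas hnull,
    volume_closedBall_inter_halfSpace M v hv hR hφ₀ hφπ,
    volume_closedBall_inter_halfSpace _ (-v) (by rw [norm_neg, hv]) hr hψ₀ hψπ,
    ← ENNReal.ofReal_add (mul_nonneg (sq_nonneg R) (hseg_nonneg φ hφ₀))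
      (mul_nonneg (sq_nonneg r) (hseg_nonneg ψ hψ₀))]
  congr 1
  subst hd
  linear_combination (r * cos ψ) * hsin

theorem mul_cos_arccos_sq_add_sq_sub_sq_div {a b c : ℝ} (ha : 0 < a) (hb : 0 < b)
    (hc₁ : |a - b| ≤ c) (hc₂ : c ≤ a + b) :
    a * cos (arccos ((a ^ 2 + b ^ 2 - c ^ 2) / (2 * a * b)))
      = (a ^ 2 + b ^ 2 - c ^ 2) / (2 * b) := by
  have hc : 0 ≤ c := (abs_nonneg _).trans hc₁
  have hab := abs_le.1 hc₁
  rw [cos_arccos (by rw [le_div_iff₀ (by positivity)]; nlinarith)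
    (by rw [div_le_iff₀ (by positivity)]; nlinarith)]
  field_simp

/-- Appendix F: with `d = dist(M,S) > 0`, radii `0 < r ≤ R` and `R − r ≤ d ≤ R + r`, the area
of the intersection of the disk of radius `R` around `M` with the disk of radius `r` around
`S` is `φ₃R² + φ₄r² − R·d·sin φ₃` where `φ₃ = arccos((R² + d² − r²)/(2Rd))` and
`φ₄ = arccos((r² + d² − R²)/(2rd))`. -/
theorem stmt_17 (M S : EuclideanSpace ℝ (Fin 2)) (r R : ℝ)
    (hr : 0 < r) (hrR : r ≤ R) (hd : 0 < dist M S)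
    (h1 : R - r ≤ dist M S) (h2 : dist M S ≤ R + r) :
    volume (Metric.closedBall M R ∩ Metric.closedBall S r)
      = ENNReal.ofReal
          (Real.arccos ((R ^ 2 + dist M S ^ 2 - r ^ 2) / (2 * R * dist M S)) * R ^ 2
            + Real.arccos ((r ^ 2 + dist M S ^ 2 - R ^ 2) / (2 * r * dist M S)) * r ^ 2
            - R * dist M S
              * Real.sin (Real.arccos ((R ^ 2 + dist M S ^ 2 - r ^ 2) / (2 * R * dist M S)))) := by
  have hR : 0 < R := hr.trans_le hrR
  set d := dist M S
  set φ := arccos ((R ^ 2 + d ^ 2 - r ^ 2) / (2 * R * d))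
  set ψ := arccos ((r ^ 2 + d ^ 2 - R ^ 2) / (2 * r * d))
  have hcosφ : R * cos φ = (R ^ 2 + d ^ 2 - r ^ 2) / (2 * d) :=
    mul_cos_arccos_sq_add_sq_sub_sq_div hR hd (abs_le.2 ⟨by linarith, by linarith⟩) (by linarith)
  have hcosψ : r * cos ψ = (r ^ 2 + d ^ 2 - R ^ 2) / (2 * d) :=
    mul_cos_arccos_sq_add_sq_sub_sq_div hr hd (abs_le.2 ⟨by linarith, by linarith⟩) (by linarith)
  have hd_eq : R * cos φ + r * cos ψ = d := by rw [hcosφ, hcosψ]; field_simp; ring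
  have hsin : R * sin φ = r * sin ψ := by
    have hsq : (R * sin φ) ^ 2 = (r * sin ψ) ^ 2 := by
      rw [mul_pow, mul_pow, sin_sq, sin_sq, mul_sub, mul_sub, ← mul_pow, ← mul_pow, hcosφ, hcosψ]
      field_simp
      ring
    refine (sq_eq_sq₀ ?_ ?_).1 hsq <;> rw [sin_arccos] <;> positivity
  set v := d⁻¹ • (S - M)
  have hv : ‖v‖ = 1 := by
    rw [norm_smul, norm_inv, norm_eq_abs, abs_of_pos hd, ← dist_eq_norm, dist_comm,
      inv_mul_cancel₀ hd.ne']
  have hS : M + d • v = S := by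
    rw [smul_smul, mul_inv_cancel₀ hd.ne', one_smul, add_sub_cancel]
  simpa only [hS] using EuclideanSpace.volume_closedBall_inter_closedBall M v hv hR.le hr.le
    (arccos_nonneg _) (arccos_le_pi _) (arccos_nonneg _) (arccos_le_pi _) hsin hd_eq hd.le
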